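/- arXiv:1810.01650 — 3 statements merged into one kernel-verified Lean document; each statement's English description precedes it below -/
import Mathlib

section
/- Let S be a subring of M₂(ℝ) containing the identity matrix that is also an ℝ-linear subspace of dimension exactly 2, and suppose every invertible matrix in S has positive determinant. Then there exists an invertible matrix M ∈ GL₂(ℝ) such that either M⁻¹ S M = { !![a, -b; b, a] : a, b ∈ ℝ } or M⁻¹ S M = { !![a, 0; b, a] : a, b ∈ ℝ }. -/
open Matrix

lemma comb1 (x y q : ℝ) : x • (1 : Matrix (Fin 2) (Fin 2) ℝ) + y • !![0, -q; q, 0]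
    = !![x, -(y*q); y*q, x] := by
  ext i j
  fin_cases i <;> fin_cases j <;> simp [Matrix.one_apply]

lemma comb2 (x y : ℝ) : x • (1 : Matrix (Fin 2) (Fin 2) ℝ) + y • !![0, 0; 1, 0]
    = !![x, 0; y, x] := by
  ext i j
  fin_cases i <;> fin_cases j <;> simp [Matrix.one_apply]

/-- If Y ∈ S is non-scalar and S is 2-dimensional, every element of S is x•1 + y•Y. -/
lemma span_eq_aux (S : Subalgebra ℝ (Matrix (Fin 2) (Fin 2) ℝ))
    (hdim : Module.finrank ℝ S = 2)
    (Y : Matrix (Fin 2) (Fin 2) ℝ) (hY : Y ∈ S)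
    (hY1 : ∀ r : ℝ, Y ≠ r • 1) :
    ∀ B ∈ S, ∃ x y : ℝ, B = x • 1 + y • Y := by
  have hind : LinearIndependent ℝ ![(1 : Matrix (Fin 2) (Fin 2) ℝ), Y] := by
    rw [LinearIndependent.pair_iff]
    intro s t hst
    by_cases ht : t = 0
    · subst ht
      simp only [smul_zero, zero_smul, add_zero] at hst
      rcases smul_eq_zero.mp hst with h | h
      · exact ⟨h, rfl⟩
      · exact absurd h one_ne_zero
    · exfalso
      apply hY1 (-s / t)
      have h1 : t • Y = (-s) • (1 : Matrix (Fin 2) (Fin 2) ℝ) := by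
        rw [neg_smul]
        linear_combination (norm := module) hst
      have h2 := congrArg (fun Z => t⁻¹ • Z) h1
      simp only [smul_smul, inv_mul_cancel₀ ht, one_smul] at h2
      rw [h2]
      congr 1
      field_simp
  have hle : Submodule.span ℝ (Set.range ![(1 : Matrix (Fin 2) (Fin 2) ℝ), Y])
      ≤ Subalgebra.toSubmodule S := by
    rw [Submodule.span_le]
    rintro Z ⟨i, rfl⟩
    fin_cases i
    · exact S.one_mem
    · exact hY
  have hfr : Module.finrank ℝ (Submodule.span ℝ
      (Set.range ![(1 : Matrix (Fin 2) (Fin 2) ℝ), Y])) = 2 := by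
    rw [finrank_span_eq_card hind]; simp
  have heq : Submodule.span ℝ (Set.range ![(1 : Matrix (Fin 2) (Fin 2) ℝ), Y])
      = Subalgebra.toSubmodule S := by
    apply Submodule.eq_of_le_of_finrank_le hle
    rw [hfr]
    exact le_of_eq hdim
  intro B hB
  have hBmem : B ∈ Submodule.span ℝ (Set.range ![(1 : Matrix (Fin 2) (Fin 2) ℝ), Y]) := by
    rw [heq]; exact hB
  have hrange : Set.range ![(1 : Matrix (Fin 2) (Fin 2) ℝ), Y] = {1, Y} := by
    ext Z; constructor
    · rintro ⟨i, rfl⟩; fin_cases i <;> simp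
    · rintro (rfl | rfl)
      · exact ⟨0, rfl⟩
      · exact ⟨1, rfl⟩
  rw [hrange, Submodule.mem_span_pair] at hBmem
  obtain ⟨x, y, h⟩ := hBmem
  exact ⟨x, y, h.symm⟩

/-- Conjugation image of S. -/
lemma image_conj_aux (S : Subalgebra ℝ (Matrix (Fin 2) (Fin 2) ℝ))
    (hdim : Module.finrank ℝ S = 2)
    (Y : Matrix (Fin 2) (Fin 2) ℝ) (hY : Y ∈ S) (hY1 : ∀ r : ℝ, Y ≠ r • 1)
    (M K : Matrix (Fin 2) (Fin 2) ℝ) (hM : IsUnit M.det)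
    (hK : Y * M = M * K) :
    (fun A => M⁻¹ * A * M) '' (S : Set (Matrix (Fin 2) (Fin 2) ℝ))
      = {A | ∃ x y : ℝ, A = x • 1 + y • K} := by
  have hMinv : M⁻¹ * M = 1 := nonsing_inv_mul M hM
  have hconj : ∀ x y : ℝ, M⁻¹ * (x • 1 + y • Y) * M = x • 1 + y • K := by
    intro x y
    rw [mul_add, add_mul, Matrix.mul_smul, Matrix.mul_smul, Matrix.smul_mul, Matrix.smul_mul,
      mul_one, hMinv, Matrix.mul_assoc, hK, ← Matrix.mul_assoc, hMinv, Matrix.one_mul]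
  ext A
  constructor
  · rintro ⟨B, hB, rfl⟩
    obtain ⟨x, y, rfl⟩ := span_eq_aux S hdim Y hY hY1 B hB
    refine ⟨x, y, ?_⟩
    show M⁻¹ * (x • 1 + y • Y) * M = _
    exact hconj x y
  · rintro ⟨x, y, rfl⟩
    refine ⟨x • 1 + y • Y, S.add_mem (S.smul_mem S.one_mem x) (S.smul_mem hY y), ?_⟩
    show M⁻¹ * (x • 1 + y • Y) * M = _
    exact hconj x y

theorem stmt6 (S : Subalgebra ℝ (Matrix (Fin 2) (Fin 2) ℝ))
    (hdim : Module.finrank ℝ S = 2)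
    (hdet : ∀ A ∈ S, IsUnit A → 0 < A.det) :
    ∃ M : Matrix (Fin 2) (Fin 2) ℝ, IsUnit M ∧
      ((fun A => M⁻¹ * A * M) '' (S : Set (Matrix (Fin 2) (Fin 2) ℝ)) =
          {A | ∃ a b : ℝ, A = !![a, -b; b, a]} ∨
        (fun A => M⁻¹ * A * M) '' (S : Set (Matrix (Fin 2) (Fin 2) ℝ)) =
          {A | ∃ a b : ℝ, A = !![a, 0; b, a]}) := by
  -- Step 1: find a non-scalar X ∈ S
  have hX : ∃ X ∈ S, ∀ r : ℝ, X ≠ r • 1 := by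
    by_contra h
    push_neg at h
    have hle : Subalgebra.toSubmodule S ≤ Submodule.span ℝ {(1 : Matrix (Fin 2) (Fin 2) ℝ)} := by
      intro Z hZ
      obtain ⟨r, hr⟩ := h Z hZ
      rw [Submodule.mem_span_singleton]
      exact ⟨r, hr.symm⟩
    have h1 : Module.finrank ℝ (Submodule.span ℝ {(1 : Matrix (Fin 2) (Fin 2) ℝ)}) = 1 :=
      finrank_span_singleton one_ne_zero
    have h3 := Submodule.finrank_mono hle
    rw [h1] at h3
    have h2 : Module.finrank ℝ (Subalgebra.toSubmodule S) = 2 := hdim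
    omega
  obtain ⟨X, hXS, hXns⟩ := hX
  -- Step 2: center it
  set Y : Matrix (Fin 2) (Fin 2) ℝ := X - ((X 0 0 + X 1 1) / 2) • 1 with hYdef
  have hYS : Y ∈ S := S.sub_mem hXS (S.smul_mem S.one_mem _)
  have hYns : ∀ r : ℝ, Y ≠ r • 1 := by
    intro r hr
    apply hXns (r + (X 0 0 + X 1 1) / 2)
    rw [add_smul]
    rw [hYdef, sub_eq_iff_eq_add] at hr
    exact hr
  obtain ⟨a, b, c, hYeq⟩ : ∃ a b c : ℝ, Y = !![a, b; c, -a] := by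
    refine ⟨Y 0 0, Y 0 1, Y 1 0, ?_⟩
    have hY11 : Y 1 1 = -(Y 0 0) := by
      simp only [hYdef, Matrix.sub_apply, Matrix.smul_apply, Matrix.one_apply, smul_eq_mul]
      norm_num
      ring
    ext i j
    fin_cases i <;> fin_cases j <;> simp [hY11]
  clear hYdef
  set δ : ℝ := a ^ 2 + b * c with hδ
  have hdetY : Y.det = -δ := by
    rw [hYeq, Matrix.det_fin_two_of]; ring
  rcases lt_trichotomy δ 0 with hneg | hzero | hpos
  · -- δ < 0 : rotation case
    set q : ℝ := Real.sqrt (-δ) with hq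
    have hq0 : 0 < q := Real.sqrt_pos.mpr (by linarith)
    have hq2 : q * q = -δ := Real.mul_self_sqrt (by linarith)
    have hcne : c ≠ 0 := by
      intro h
      rw [h] at hδ
      nlinarith [sq_nonneg a]
    have hdetM : (!![1, a / q; 0, c / q] : Matrix (Fin 2) (Fin 2) ℝ).det = c / q := by
      rw [Matrix.det_fin_two_of]; ring
    have hMunit : IsUnit (!![1, a / q; 0, c / q] : Matrix (Fin 2) (Fin 2) ℝ).det := by
      rw [hdetM]
      exact (isUnit_iff_ne_zero).mpr (div_ne_zero hcne (ne_of_gt hq0))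
    have hYM : Y * !![1, a / q; 0, c / q] = !![1, a / q; 0, c / q] * !![0, -q; q, 0] := by
      rw [hYeq]
      ext i j
      fin_cases i <;> fin_cases j <;>
        simp [Matrix.mul_apply, Fin.sum_univ_two] <;>
        field_simp <;> nlinarith [hq2]
    refine ⟨!![1, a / q; 0, c / q], (Matrix.isUnit_iff_isUnit_det _).mpr hMunit, Or.inl ?_⟩
    rw [image_conj_aux S hdim Y hYS hYns _ _ hMunit hYM]
    ext A
    simp only [Set.mem_setOf_eq]
    constructor
    · rintro ⟨x, y, rfl⟩
      exact ⟨x, y * q, by rw [comb1]⟩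
    · rintro ⟨u, v, rfl⟩
      refine ⟨u, v / q, ?_⟩
      rw [comb1, div_mul_cancel₀ v (ne_of_gt hq0)]
  · -- δ = 0 : nilpotent case
    by_cases hcne : c ≠ 0
    · have hdetM : (!![1, a; 0, c] : Matrix (Fin 2) (Fin 2) ℝ).det = c := by
        rw [Matrix.det_fin_two_of]; ring
      have hMunit : IsUnit (!![1, a; 0, c] : Matrix (Fin 2) (Fin 2) ℝ).det := by
        rw [hdetM]; exact isUnit_iff_ne_zero.mpr hcne
      have hYM : Y * !![1, a; 0, c] = !![1, a; 0, c] * !![0, 0; 1, 0] := by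
        rw [hYeq]
        ext i j
        fin_cases i <;> fin_cases j <;>
          simp [Matrix.mul_apply, Fin.sum_univ_two] <;> nlinarith [hzero]
      refine ⟨!![1, a; 0, c], (Matrix.isUnit_iff_isUnit_det _).mpr hMunit, Or.inr ?_⟩
      rw [image_conj_aux S hdim Y hYS hYns _ _ hMunit hYM]
      ext A
      simp only [Set.mem_setOf_eq]
      constructor
      · rintro ⟨x, y, rfl⟩
        exact ⟨x, y, by rw [comb2]⟩
      · rintro ⟨u, v, rfl⟩
        exact ⟨u, v, by rw [comb2]⟩
    · push_neg at hcne
      have ha0 : a = 0 := by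
        have h2 : a ^ 2 = 0 := by rw [hcne] at hδ; nlinarith
        exact pow_eq_zero_iff (two_ne_zero) |>.mp h2
      have hbne : b ≠ 0 := by
        intro hb0
        apply hYns 0
        rw [hYeq, ha0, hb0, hcne]
        ext i j
        fin_cases i <;> fin_cases j <;> simp
      have hdetM : (!![0, b; 1, 0] : Matrix (Fin 2) (Fin 2) ℝ).det = -b := by
        rw [Matrix.det_fin_two_of]; ring
      have hMunit : IsUnit (!![0, b; 1, 0] : Matrix (Fin 2) (Fin 2) ℝ).det := by
        rw [hdetM]; exact isUnit_iff_ne_zero.mpr (neg_ne_zero.mpr hbne)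
      have hYM : Y * !![0, b; 1, 0] = !![0, b; 1, 0] * !![0, 0; 1, 0] := by
        rw [hYeq, ha0, hcne]
        ext i j
        fin_cases i <;> fin_cases j <;>
          simp [Matrix.mul_apply, Fin.sum_univ_two]
      refine ⟨!![0, b; 1, 0], (Matrix.isUnit_iff_isUnit_det _).mpr hMunit, Or.inr ?_⟩
      rw [image_conj_aux S hdim Y hYS hYns _ _ hMunit hYM]
      ext A
      simp only [Set.mem_setOf_eq]
      constructor
      · rintro ⟨x, y, rfl⟩
        exact ⟨x, y, by rw [comb2]⟩
      · rintro ⟨u, v, rfl⟩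
        exact ⟨u, v, by rw [comb2]⟩
  · -- δ > 0 : contradiction with hdet
    exfalso
    have hdYne : Y.det ≠ 0 := by rw [hdetY]; linarith
    have hYunit : IsUnit Y := (Matrix.isUnit_iff_isUnit_det Y).mpr (isUnit_iff_ne_zero.mpr hdYne)
    have hpos' := hdet Y hYS hYunit
    rw [hdetY] at hpos'
    linarith
end

section
/- Let U ⊆ ℝ² be an open connected set, and let C₁, …, C_r be subsets of U, each closed in the subspace topology of U, whose union is U, and such that C_i ∩ C_j is finite whenever i ≠ j. Then C_j = U for some j. -/
/-!
Removing finitely many points from an open connected subset `U` of the plane leaves it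
connected: near each removed point, `U` contains a punctured ball, which is connected (it is the
image of `sphere × interval` in polar coordinates). Let `F` be the finite union of the pairwise
intersections `Cᵢ ∩ Cⱼ`. On `U \ F` the sets `Cᵢ` are pairwise disjoint and relatively closed,
so `Cⱼ` and the union of the others split the connected set `U \ F`; hence `U \ F ⊆ Cⱼ` for some
`j`, and since `U \ F` is dense in `U` and `Cⱼ` is closed in `U`, we get `Cⱼ = U`.
-/

open Set Metric Topology

theorem IsPreconnected.sdiff_singleton_of_nhds {X : Type*} [TopologicalSpace X] [T1Space X]
    {U N : Set X} {x : X} (hU : IsPreconnected U) (hN : N ∈ 𝓝 x) (hNU : N ⊆ U)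
    (hNx : IsPreconnected (N \ {x})) : IsPreconnected (U \ {x}) := by
  rw [isPreconnected_iff_subset_of_disjoint]
  intro u v hu hv hcover hdisj
  have hNU' : N \ {x} ⊆ U \ {x} := sdiff_subset_sdiff_left hNU
  wlog hNu : N \ {x} ⊆ u generalizing u v
  · have hNv : N \ {x} ⊆ v :=
      ((isPreconnected_iff_subset_of_disjoint.1 hNx) u v hu hv (hNU'.trans hcover)
        (eq_empty_of_subset_empty (hdisj ▸ inter_subset_inter_left _ hNU'))).resolve_left hNu
    exact (this v u hv hu (union_comm u v ▸ hcover) (inter_comm u v ▸ hdisj) hNv).symm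
  -- Put `x` on the side of `u`: `U` is covered by the disjoint open sets `u ∪ interior N` and
  -- `v \ {x}`.
  have hsplit := (isPreconnected_iff_subset_of_disjoint.1 hU) (u ∪ interior N) (v \ {x})
    (hu.union isOpen_interior) (hv.sdiff isClosed_singleton) ?_ ?_
  · refine Or.inl fun y hy ↦ ?_
    rcases hsplit with hUu | hUv
    · exact (hUu hy.1).elim id fun hyN ↦ hNu ⟨interior_subset hyN, hy.2⟩
    · exact absurd rfl (hUv (hNU (mem_of_mem_nhds hN))).2
  · intro y hy
    by_cases hyx : y = x
    · exact Or.inl (Or.inr (hyx ▸ mem_interior_iff_mem_nhds.2 hN))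
    · exact (hcover ⟨hy, hyx⟩).imp Or.inl fun hyv ↦ ⟨hyv, hyx⟩
  · refine eq_empty_of_forall_notMem fun y ⟨hyU, hyuN, hyv, hyx⟩ ↦ ?_
    have hyu : y ∈ u := hyuN.elim id fun hyN ↦ hNu ⟨interior_subset hyN, hyx⟩
    exact eq_empty_iff_forall_notMem.1 hdisj y ⟨⟨hyU, hyx⟩, hyu, hyv⟩

section NormedSpace

variable {E : Type*} [NormedAddCommGroup E] [NormedSpace ℝ E]

theorem ball_sdiff_singleton_eq_image_sphere_prod_Ioo (x : E) (ε : ℝ) :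
    ball x ε \ {x} = (fun p : E × ℝ ↦ x + p.2 • p.1) '' (sphere 0 1 ×ˢ Ioo 0 ε) := by
  ext w
  constructor
  · rintro ⟨hw, hwx : w ≠ x⟩
    have hpos : 0 < ‖w - x‖ := norm_pos_iff.2 (sub_ne_zero.2 hwx)
    refine ⟨(‖w - x‖⁻¹ • (w - x), ‖w - x‖), ⟨?_, hpos, ?_⟩, ?_⟩
    · simp [norm_smul, hpos.ne']
    · simpa [dist_eq_norm] using hw
    · simp [smul_smul, hpos.ne']
  · rintro ⟨⟨u, t⟩, ⟨hu, ht0, htε⟩, rfl⟩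
    have hu' : ‖u‖ = 1 := by simpa using hu
    refine ⟨?_, ?_⟩
    · simp [dist_eq_norm, norm_smul, hu', abs_of_pos ht0, htε]
    · simp [ht0.ne', ne_zero_of_norm_ne_zero (hu'.symm ▸ one_ne_zero : ‖u‖ ≠ 0)]

theorem isPreconnected_ball_sdiff_singleton (h : 1 < Module.rank ℝ E) (x : E) (ε : ℝ) :
    IsPreconnected (ball x ε \ {x}) := by
  rw [ball_sdiff_singleton_eq_image_sphere_prod_Ioo]
  exact ((isPreconnected_sphere h 0 1).prod isPreconnected_Ioo).image _
    (by fun_prop : Continuous fun p : E × ℝ ↦ x + p.2 • p.1).continuousOn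

theorem IsOpen.isPreconnected_sdiff_singleton (h : 1 < Module.rank ℝ E) {U : Set E}
    (hU : IsOpen U) (hUc : IsPreconnected U) (x : E) : IsPreconnected (U \ {x}) := by
  by_cases hx : x ∈ U
  · obtain ⟨ε, hε, hεU⟩ := isOpen_iff.1 hU x hx
    exact hUc.sdiff_singleton_of_nhds (ball_mem_nhds x hε) hεU
      (isPreconnected_ball_sdiff_singleton h x ε)
  · rwa [sdiff_singleton_eq_self hx]

theorem IsOpen.isPreconnected_sdiff_finite (h : 1 < Module.rank ℝ E) {U F : Set E}
    (hU : IsOpen U) (hUc : IsPreconnected U) (hF : F.Finite) : IsPreconnected (U \ F) := by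
  induction F, hF using Set.Finite.induction_on generalizing U with
  | empty => rwa [sdiff_empty]
  | @insert x F _ _ ih =>
    rw [insert_eq, ← sdiff_sdiff]
    exact ih (hU.sdiff isClosed_singleton) (hU.isPreconnected_sdiff_singleton h hUc x)

end NormedSpace

theorem exists_eq_univ_of_isClosed_cover {Y ι : Type*} [TopologicalSpace Y] [Finite ι]
    [Nonempty Y] {C : ι → Set Y} {S : Set Y} (hC : ∀ i, IsClosed (C i))
    (hcover : ⋃ i, C i = univ) (hCS : ∀ i j, i ≠ j → C i ∩ C j ⊆ S)
    (hS : IsPreconnected Sᶜ) (hSd : Dense Sᶜ) : ∃ j, C j = univ := by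
  obtain ⟨y, hy⟩ := hSd.nonempty
  obtain ⟨j, hyj⟩ := mem_iUnion.1 (hcover ▸ mem_univ y)
  set W := ⋃ (i) (_ : i ≠ j), C i
  have hSW : Sᶜ ∩ (C j ∩ W) = ∅ := by
    refine eq_empty_of_forall_notMem fun z ⟨hzS, hzj, hzW⟩ ↦ ?_
    obtain ⟨i, hij, hzi⟩ := mem_iUnion₂.1 hzW
    exact hzS (hCS i j hij ⟨hzi, hzj⟩)
  have hSj : Sᶜ ⊆ C j := by
    refine ((isPreconnected_iff_subset_of_disjoint_closed.1 hS) (C j) W (hC j)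
      (isClosed_iUnion_of_finite fun i ↦ isClosed_iUnion_of_finite fun _ ↦ hC i) ?_ hSW
      ).resolve_right fun hSW' ↦ eq_empty_iff_forall_notMem.1 hSW y ⟨hy, hyj, hSW' hy⟩
    intro z _
    obtain ⟨i, hzi⟩ := mem_iUnion.1 (hcover ▸ mem_univ z)
    rcases eq_or_ne i j with rfl | hij
    · exact Or.inl hzi
    · exact Or.inr (mem_iUnion₂.2 ⟨i, hij, hzi⟩)
  exact ⟨j, eq_univ_of_univ_subset (hSd.closure_eq ▸ (hC j).closure_subset_iff.2 hSj)⟩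

theorem stmt18 (U : Set (ℝ × ℝ)) (hU : IsOpen U) (hconn : IsConnected U)
    (r : ℕ) (C : Fin r → Set (ℝ × ℝ))
    (hsub : ∀ i, C i ⊆ U)
    (hclosed : ∀ i, IsClosed {x : U | (x : ℝ × ℝ) ∈ C i})
    (hunion : (⋃ i, C i) = U)
    (hfin : ∀ i j, i ≠ j → (C i ∩ C j).Finite) :
    ∃ j, C j = U := by
  set F := ⋃ (i) (j) (_ : i ≠ j), C i ∩ C j
  have hF : F.Finite := finite_iUnion fun i ↦ finite_iUnion fun j ↦ finite_iUnion (hfin i j)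
  have hrank : 1 < Module.rank ℝ (ℝ × ℝ) := by
    rw [← Module.finrank_eq_rank]; simp
  have : Nonempty U := hconn.nonempty.to_subtype
  obtain ⟨j, hj⟩ := exists_eq_univ_of_isClosed_cover (S := (↑) ⁻¹' F) hclosed
    (by ext x; simpa [← hunion] using x.2)
    (fun i j hij x hx ↦ mem_iUnion₂.2 ⟨i, j, mem_iUnion.2 ⟨hij, hx⟩⟩)
    (by
      rw [← IsInducing.subtypeVal.isPreconnected_image, ← preimage_compl,
        Subtype.image_preimage_coe]
      exact hU.isPreconnected_sdiff_finite hrank hconn.isPreconnected hF)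
    ((hF.countable.dense_compl ℝ).preimage hU.isOpenMap_subtype_val)
  exact ⟨j, (hsub j).antisymm fun x hx ↦ (eq_univ_iff_forall.1 hj ⟨x, hx⟩ :)⟩
end

section
/- Let U ⊆ ℝ² be an open set, p ∈ U, and let f : U → ℝ² be a continuous function such that the restriction of f to U ∖ {p} is an open map (i.e., f maps every open subset of U not containing p to an open subset of ℝ²). Then f itself is an open map on U. -/
/-!
Suppose `f p` is not already attained on `V \ {p}`, and pick a compact neighbourhood `K ⊆ V`
of `p`. Then `f p` has positive distance `d` from the compact set `f '' (K \ interior K)`,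
and inside the punctured ball of radius `d` about `f p` the open set
`W = f '' (interior K \ {p})` is relatively closed, since `closure W ⊆ f '' K`. It meets that
punctured ball by continuity at `p`, and punctured balls in the plane are connected, so
it contains the whole punctured ball.
-/

open Metric Set Topology Filter OpenPartialHomeomorph

lemma isPreconnected_ball_diff_singleton {E : Type*} [NormedAddCommGroup E] [NormedSpace ℝ E]
    (hE : 1 < Module.rank ℝ E) (c : E) (r : ℝ) : IsPreconnected (ball c r \ {c}) := by
  rcases le_or_gt r 0 with hr | hr
  · simpa [ball_eq_empty.2 hr] using isPreconnected_empty
  have hinj : Function.Injective (univBall c r) := by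
    simpa [injOn_univ] using (univBall c r).injOn
  have himage : ball c r \ {c} = univBall c r '' {0}ᶜ := by
    rw [← univBall_target c hr, ← (univBall c r).image_source_eq_target, univBall_source,
      compl_eq_univ_sdiff, image_sdiff hinj, image_singleton, univBall_apply_zero]
  rw [himage]
  exact ((isConnected_compl_singleton_of_one_lt_rank hE 0).image _
    (continuous_univBall c r).continuousOn).isPreconnected

lemma image_mem_nhds_of_isOpen_image_punctured {X E : Type*} [TopologicalSpace X]
    [NormedAddCommGroup E] [NormedSpace ℝ E] (hE : 1 < Module.rank ℝ E)
    {f : X → E} {K : Set X} {x : X} [(𝓝[≠] x).NeBot] (hK : IsCompact K) (hKx : K ∈ 𝓝 x)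
    (hf : ContinuousOn f K) (hfx : f x ∉ f '' (K \ {x}))
    (hW : IsOpen (f '' (interior K \ {x}))) : f '' K ∈ 𝓝 (f x) := by
  set W := f '' (interior K \ {x})
  have hfrontier : IsCompact (f '' (K \ interior K)) :=
    (hK.diff isOpen_interior).image_of_continuousOn (hf.mono sdiff_subset)
  have hfx_frontier : f x ∉ f '' (K \ interior K) :=
    fun h ↦ hfx (image_mono (sdiff_subset_sdiff_right (singleton_subset_iff.2
      (mem_interior_iff_mem_nhds.2 hKx))) h)
  obtain ⟨d, hd, hball⟩ :=
    Metric.mem_nhds_iff.1 (hfrontier.isClosed.compl_mem_nhds hfx_frontier)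
  have hmeet : ((ball (f x) d \ {f x}) ∩ W).Nonempty := by
    have hnhds : f ⁻¹' ball (f x) d ∩ interior K ∈ 𝓝[≠] x :=
      nhdsWithin_le_nhds <| inter_mem
        ((hf.continuousAt hKx).preimage_mem_nhds (ball_mem_nhds _ hd)) (interior_mem_nhds.2 hKx)
    obtain ⟨z, ⟨hzd, hzK⟩, hzx⟩ :=
      Filter.nonempty_of_mem (inter_mem hnhds self_mem_nhdsWithin)
    have hfz : f z ≠ f x := fun h ↦ hfx ⟨z, ⟨interior_subset hzK, hzx⟩, h⟩
    exact ⟨f z, ⟨hzd, hfz⟩, z, ⟨hzK, hzx⟩, rfl⟩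
  have hclosed : closure W ∩ (ball (f x) d \ {f x}) ⊆ W := by
    rintro y ⟨hyW, hyd, hyx⟩
    have hWK : W ⊆ f '' K := image_mono (sdiff_subset.trans interior_subset)
    obtain ⟨z, hzK, rfl⟩ :=
      closure_minimal hWK (hK.image_of_continuousOn hf).isClosed hyW
    by_cases hz : z ∈ interior K
    · exact ⟨z, ⟨hz, fun h ↦ hyx (congrArg f h)⟩, rfl⟩
    · exact absurd ⟨z, ⟨hzK, hz⟩, rfl⟩ (hball hyd)
  have hpunctured : ball (f x) d \ {f x} ⊆ W :=
    (isPreconnected_ball_diff_singleton hE _ _).subset_of_closure_inter_subset hW hmeet hclosed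
  refine mem_of_superset (ball_mem_nhds _ hd) fun y hy ↦ ?_
  by_cases hyx : y = f x
  · exact hyx ▸ mem_image_of_mem f (mem_of_mem_nhds hKx)
  · exact image_mono (sdiff_subset.trans interior_subset) (hpunctured ⟨hy, hyx⟩)

theorem stmt19_general (U : Set (ℝ × ℝ)) (p : ℝ × ℝ)
    (f : ℝ × ℝ → ℝ × ℝ) (hcont : ContinuousOn f U)
    (hopen : ∀ V : Set (ℝ × ℝ), IsOpen V → V ⊆ U → p ∉ V → IsOpen (f '' V)) :
    ∀ V : Set (ℝ × ℝ), IsOpen V → V ⊆ U → IsOpen (f '' V) := by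
  intro V hV hVU
  have hrank : 1 < Module.rank ℝ (ℝ × ℝ) := by
    rw [rank_prod', Module.rank_self]
    norm_num
  have hpunct : IsOpen (f '' (V \ {p})) :=
    hopen _ (hV.sdiff isClosed_singleton) (sdiff_subset.trans hVU) fun h ↦ h.2 rfl
  refine isOpen_iff_mem_nhds.2 ?_
  rintro _ ⟨x, hxV, rfl⟩
  by_cases hfx : f x ∈ f '' (V \ {p})
  · exact mem_of_superset (hpunct.mem_nhds hfx) (image_mono sdiff_subset)
  obtain rfl : x = p := by_contra fun hxp ↦ hfx ⟨x, ⟨hxV, hxp⟩, rfl⟩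
  obtain ⟨K, hKx, hKV, hK⟩ := local_compact_nhds (hV.mem_nhds hxV)
  refine mem_of_superset ?_ (image_mono hKV)
  refine image_mem_nhds_of_isOpen_image_punctured hrank hK hKx (hcont.mono (hKV.trans hVU))
    (fun h ↦ hfx (image_mono (sdiff_subset_sdiff_left hKV) h)) ?_
  exact hopen _ (isOpen_interior.sdiff isClosed_singleton)
    (sdiff_subset.trans (interior_subset.trans (hKV.trans hVU))) fun h ↦ h.2 rfl

theorem stmt19 (U : Set (ℝ × ℝ)) (hU : IsOpen U) (p : ℝ × ℝ) (hp : p ∈ U)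
    (f : ℝ × ℝ → ℝ × ℝ) (hcont : ContinuousOn f U)
    (hopen : ∀ V : Set (ℝ × ℝ), IsOpen V → V ⊆ U → p ∉ V → IsOpen (f '' V)) :
    ∀ V : Set (ℝ × ℝ), IsOpen V → V ⊆ U → IsOpen (f '' V) :=
  stmt19_general U p f hcont hopen
end
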